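/- Let G be a chordal graph with simplicial vertex s, and let v₁ v₀ v₂ be a path of G^s such that both edges v₀v₁ and v₀v₂ are collateral and either both or neither of v₁, v₂ belong to N_G(s). If no vertex is simultaneously a witness of v₀v₁ and of v₀v₂, then no witness of v₀v₁ is adjacent in G to any witness of v₀v₂. -/

import Mathlib

/-- The closed neighborhood `N[v]` of a vertex. -/
def closedNbr {V : Type*} (G : SimpleGraph V) (v : V) : Set V := insert v (G.neighborSet v)

/-- A vertex is simplicial if its closed neighborhood is a clique. -/
def Simplicial {V : Type*} (G : SimpleGraph V) (s : V) : Prop := G.IsClique (closedNbr G s)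

/-- A vertex is universal if it is adjacent to all other vertices. -/
def Universal {V : Type*} (G : SimpleGraph V) (v : V) : Prop := ∀ u, u ≠ v → G.Adj v u

/-- The auxiliary graph `G^s` with respect to a simplicial vertex `s`. -/
def auxGraph {V : Type*} (G : SimpleGraph V) (s : V) : SimpleGraph V where
  Adj u v := u ≠ v ∧
    ((u ∉ closedNbr G s ∧ v ∉ closedNbr G s ∧ G.Adj u v) ∨
     (u ∈ closedNbr G s ∧ v ∈ closedNbr G s ∧ G.neighborSet u ∪ G.neighborSet v ≠ Set.univ) ∨
     (u ∈ closedNbr G s ∧ v ∉ closedNbr G s ∧ ¬ closedNbr G v ⊆ closedNbr G u) ∨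
     (v ∈ closedNbr G s ∧ u ∉ closedNbr G s ∧ ¬ closedNbr G u ⊆ closedNbr G v))
  symm := by
    refine ⟨?_⟩
    rintro u v ⟨hne, h⟩
    refine ⟨hne.symm, ?_⟩
    rcases h with ⟨h1, h2, h3⟩ | ⟨h1, h2, h3⟩ | h | h
    · exact Or.inl ⟨h2, h1, h3.symm⟩
    · exact Or.inr (Or.inl ⟨h2, h1, by rwa [Set.union_comm] at h3⟩)
    · exact Or.inr (Or.inr (Or.inr h))
    · exact Or.inr (Or.inr (Or.inl h))
  loopless := ⟨fun v h => h.1 rfl⟩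

/-- A witness of an edge `uv` of `G^s`: a vertex `w ∉ N_G[s]` such that for each end `x`,
`w` is adjacent to `x` in `G` iff `x ∉ N_G[s]`. -/
def EdgeWitness {V : Type*} (G : SimpleGraph V) (s u v w : V) : Prop :=
  w ∉ closedNbr G s ∧ (G.Adj w u ↔ u ∉ closedNbr G s) ∧ (G.Adj w v ↔ v ∉ closedNbr G s)

/-- An edge of `G^s` is collateral if it is an edge of `G` and one end is in `N_G[s]`. -/
def Collateral {V : Type*} (G : SimpleGraph V) (s u v : V) : Prop :=
  (auxGraph G s).Adj u v ∧ G.Adj u v ∧ (u ∈ closedNbr G s ∨ v ∈ closedNbr G s)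

/-- A witness of a clique `K` of `G^s`: a vertex `w ∉ N_G[s]` such that `N_G[w] ∩ K` and
`N_G[s] ∩ K` partition `K`. -/
def CliqueWitness {V : Type*} (G : SimpleGraph V) (s : V) (K : Set V) (w : V) : Prop :=
  w ∉ closedNbr G s ∧ ∀ x ∈ K, (x ∈ closedNbr G w ↔ x ∉ closedNbr G s)

/-- A graph is chordal if it has no induced cycle of length at least four. -/
def Chordal {V : Type*} (G : SimpleGraph V) : Prop :=
  ¬ ∃ (n : ℕ) (f : ZMod n → V), 4 ≤ n ∧ Function.Injective f ∧
      ∀ i j : ZMod n, G.Adj (f i) (f j) ↔ (j = i + 1 ∨ i = j + 1)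

/-!
A witness of one edge that is not a witness of the other is adjacent to the far end of the other
edge exactly when that end lies in `N[s]`. If `v₁, v₂ ∈ N[s]`, they are adjacent because `s` is
simplicial, and adjacent witnesses `w₁ w₂` would give an induced cycle `v₁ w₂ w₁ v₂`. If
`v₁, v₂ ∉ N[s]`, then `v₀ ∈ N[s]` and `v₀ v₁ w₁ w₂ v₂` would contain an induced `C₄` or `C₅`.
In the mixed case the end in `N[s]` must be `s` itself, and no vertex outside `N[s]` sees `s`.
-/

namespace Chordal

variable {V : Type*} {G : SimpleGraph V}

-- `ZMod (n + 1)` is `Fin (n + 1)` by definition.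
theorem false_of_inducedCycle_fin (hG : Chordal G) {n : ℕ} (hn : 3 ≤ n) {f : Fin (n + 1) → V}
    (hf : Function.Injective f) (hadj : ∀ i j, G.Adj (f i) (f j) ↔ j = i + 1 ∨ i = j + 1) :
    False :=
  hG ⟨n + 1, f, by omega, hf, hadj⟩

theorem not_inducedCycle4 (hG : Chordal G) {a b c d : V}
    (hab : G.Adj a b) (hbc : G.Adj b c) (hcd : G.Adj c d) (hda : G.Adj d a)
    (hac : ¬ G.Adj a c) (hbd : ¬ G.Adj b d) (hac' : a ≠ c) (hbd' : b ≠ d) : False := by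
  refine hG.false_of_inducedCycle_fin le_rfl (f := ![a, b, c, d]) ?_ ?_
  · intro i j h
    fin_cases i <;> fin_cases j <;>
      simp_all [hab.ne, hbc.ne, hcd.ne, hda.ne, hab.ne', hbc.ne', hcd.ne', hda.ne']
  · intro i j
    fin_cases i <;> fin_cases j <;>
      simp_all [G.adj_comm b a, G.adj_comm c b, G.adj_comm d c, G.adj_comm a d, G.adj_comm c a,
        G.adj_comm d b]

theorem not_inducedCycle5 (hG : Chordal G) {a b c d e : V}
    (hab : G.Adj a b) (hbc : G.Adj b c) (hcd : G.Adj c d) (hde : G.Adj d e) (hea : G.Adj e a)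
    (hac : ¬ G.Adj a c) (had : ¬ G.Adj a d) (hbd : ¬ G.Adj b d) (hbe : ¬ G.Adj b e)
    (hce : ¬ G.Adj c e) (hac' : a ≠ c) (had' : a ≠ d) (hbd' : b ≠ d) (hbe' : b ≠ e)
    (hce' : c ≠ e) : False := by
  refine hG.false_of_inducedCycle_fin (by norm_num) (f := ![a, b, c, d, e]) ?_ ?_
  · intro i j h
    fin_cases i <;> fin_cases j <;>
      simp_all [hab.ne, hbc.ne, hcd.ne, hde.ne, hea.ne, hab.ne', hbc.ne', hcd.ne', hde.ne', hea.ne']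
  · intro i j
    fin_cases i <;> fin_cases j <;>
      simp_all [G.adj_comm b a, G.adj_comm c b, G.adj_comm d c, G.adj_comm e d, G.adj_comm a e,
        G.adj_comm c a, G.adj_comm d a, G.adj_comm d b, G.adj_comm e b, G.adj_comm e c]

theorem not_adj_of_induced_paths (hG : Chordal G) {v₀ v₁ v₂ w₁ w₂ : V}
    (h01 : G.Adj v₀ v₁) (h02 : G.Adj v₀ v₂) (h1 : G.Adj v₁ w₁) (h2 : G.Adj v₂ w₂)
    (hn01 : ¬ G.Adj v₀ w₁) (hn02 : ¬ G.Adj v₀ w₂) (hn12 : ¬ G.Adj v₁ w₂) (hn21 : ¬ G.Adj v₂ w₁)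
    (h12 : v₁ ≠ v₂) (hw₁ : v₀ ≠ w₁) (hw₂ : v₀ ≠ w₂) : ¬ G.Adj w₁ w₂ := by
  intro hw
  have hv₁w₂ : v₁ ≠ w₂ := by rintro rfl; exact hn02 h01
  have hv₂w₁ : v₂ ≠ w₁ := by rintro rfl; exact hn01 h02
  by_cases h12' : G.Adj v₁ v₂
  · exact hG.not_inducedCycle4 h1 hw h2.symm h12'.symm hn12 (fun h => hn21 h.symm) hv₁w₂
      hv₂w₁.symm
  · exact hG.not_inducedCycle5 h01 h1 hw h2.symm h02.symm hn01 hn02 hn12 h12' (fun h => hn21 h.symm)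
      hw₁ hw₂ hv₁w₂ h12 hv₂w₁.symm

end Chordal

section Witness

variable {V : Type*} {G : SimpleGraph V} {s u v w x : V}

theorem neighborSet_subset_closedNbr (G : SimpleGraph V) (v : V) :
    G.neighborSet v ⊆ closedNbr G v :=
  Set.subset_insert _ _

theorem eq_of_mem_closedNbr_of_notMem_neighborSet (hx : x ∈ closedNbr G v)
    (hx' : x ∉ G.neighborSet v) : x = v :=
  (Set.mem_insert_iff.1 hx).resolve_right hx'

theorem ne_of_mem_closedNbr_of_notMem (hx : x ∈ closedNbr G v) (hw : w ∉ closedNbr G v) :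
    x ≠ w := by
  rintro rfl; exact hw hx

namespace EdgeWitness

theorem not_adj_left (hw : EdgeWitness G s u v w) (hu : u ∈ closedNbr G s) : ¬ G.Adj w u :=
  fun h => hw.2.1.1 h hu

theorem not_adj_right (hw : EdgeWitness G s u v w) (hv : v ∈ closedNbr G s) : ¬ G.Adj w v :=
  fun h => hw.2.2.1 h hv

theorem adj_right (hw : EdgeWitness G s u v w) (hv : v ∉ closedNbr G s) : G.Adj w v :=
  hw.2.2.2 hv

theorem adj_iff_mem_closedNbr_of_not_edgeWitness (hw : EdgeWitness G s u v w)
    (hx : ¬ EdgeWitness G s u x w) : G.Adj w x ↔ x ∈ closedNbr G s := by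
  by_contra h
  exact hx ⟨hw.1, hw.2.1, by tauto⟩

end EdgeWitness

end Witness

theorem stmt_7_general {V : Type*} (G : SimpleGraph V) (s v₀ v₁ v₂ : V)
    (hG : Chordal G) (hs : Simplicial G s)
    (h12 : v₁ ≠ v₂)
    (hc1 : Collateral G s v₀ v₁) (hc2 : Collateral G s v₀ v₂)
    (hpar : v₁ ∈ G.neighborSet s ↔ v₂ ∈ G.neighborSet s)
    (hnocommon : ¬ ∃ w : V, EdgeWitness G s v₀ v₁ w ∧ EdgeWitness G s v₀ v₂ w) :
    ∀ w₁ w₂ : V, EdgeWitness G s v₀ v₁ w₁ → EdgeWitness G s v₀ v₂ w₂ →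
      ¬ G.Adj w₁ w₂ := by
  intro w₁ w₂ hw₁ hw₂ hadj
  have hw₁v₂ := hw₁.adj_iff_mem_closedNbr_of_not_edgeWitness fun h => hnocommon ⟨w₁, hw₁, h⟩
  have hw₂v₁ := hw₂.adj_iff_mem_closedNbr_of_not_edgeWitness fun h => hnocommon ⟨w₂, h, hw₂⟩
  have hNs := neighborSet_subset_closedNbr G s
  by_cases h1 : v₁ ∈ closedNbr G s <;> by_cases h2 : v₂ ∈ closedNbr G s
  · exact hG.not_inducedCycle4 (hw₂v₁.2 h1).symm hadj.symm (hw₁v₂.2 h2) (hs h2 h1 h12.symm)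
      (fun h => hw₁.not_adj_right h1 h.symm) (hw₂.not_adj_right h2)
      (ne_of_mem_closedNbr_of_notMem h1 hw₁.1) (ne_of_mem_closedNbr_of_notMem h2 hw₂.1).symm
  · have hv₁ : v₁ = s := eq_of_mem_closedNbr_of_notMem_neighborSet h1 (hpar.not.2 (h2 <| hNs ·))
    exact hw₂.1 (Set.mem_insert_of_mem _ (hv₁ ▸ hw₂v₁.2 h1).symm)
  · have hv₂ : v₂ = s := eq_of_mem_closedNbr_of_notMem_neighborSet h2 (hpar.not.1 (h1 <| hNs ·))
    exact hw₁.1 (Set.mem_insert_of_mem _ (hv₂ ▸ hw₁v₂.2 h2).symm)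
  · have hv₀ : v₀ ∈ closedNbr G s := hc1.2.2.resolve_right h1
    exact hG.not_adj_of_induced_paths hc1.2.1 hc2.2.1 (hw₁.adj_right h1).symm
      (hw₂.adj_right h2).symm (fun h => hw₁.not_adj_left hv₀ h.symm)
      (fun h => hw₂.not_adj_left hv₀ h.symm) (fun h => h1 (hw₂v₁.1 h.symm))
      (fun h => h2 (hw₁v₂.1 h.symm)) h12 (ne_of_mem_closedNbr_of_notMem hv₀ hw₁.1)
      (ne_of_mem_closedNbr_of_notMem hv₀ hw₂.1) hadj

/-- If v₁ v₀ v₂ is a path of G^s whose edges v₀v₁ and v₀v₂ are collateral,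
with either both or neither of v₁, v₂ in N_G(s), and no vertex witnesses both edges,
then no witness of v₀v₁ is adjacent in G to any witness of v₀v₂. -/
theorem stmt_7 {V : Type*} [Fintype V] (G : SimpleGraph V) (s v₀ v₁ v₂ : V)
    (hG : Chordal G) (hs : Simplicial G s)
    (h12 : v₁ ≠ v₂)
    (ha1 : (auxGraph G s).Adj v₀ v₁) (ha2 : (auxGraph G s).Adj v₀ v₂)
    (hc1 : Collateral G s v₀ v₁) (hc2 : Collateral G s v₀ v₂)
    (hpar : v₁ ∈ G.neighborSet s ↔ v₂ ∈ G.neighborSet s)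
    (hnocommon : ¬ ∃ w : V, EdgeWitness G s v₀ v₁ w ∧ EdgeWitness G s v₀ v₂ w) :
    ∀ w₁ w₂ : V, EdgeWitness G s v₀ v₁ w₁ → EdgeWitness G s v₀ v₂ w₂ →
      ¬ G.Adj w₁ w₂ :=
  stmt_7_general G s v₀ v₁ v₂ hG hs h12 hc1 hc2 hpar hnocommon
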